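/- Let (V,w) be a weighted graph, let 0 < ε ≤ 1/2, let V' ⊆ V, and let k ≥ 1 be an integer with 2k ≤ |V'| ≤ k/ε. Suppose that every unordered pair {u,v} with w(u,v) > 0 has at least one endpoint in V'. Then there exists S ⊆ V' with |S| = k such that δ_w(S) ≥ ε · Σ_{{u,v}} w(u,v), where the sum is over all unordered pairs of distinct vertices (i.e., the cut value of some feasible k-set is at least an ε fraction of the total edge weight). (Lemma 3.2, part 2.) -/

import Mathlib

open Finset

/-- The cut value of a set `S`: total weight of pairs with exactly one endpoint in `S`. -/
noncomputable def cutVal {V : Type*} [Fintype V] [DecidableEq V]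
    (w : V → V → ℝ) (S : Finset V) : ℝ :=
  ∑ u ∈ S, ∑ v ∈ Sᶜ, w u v

/-- The total edge weight: the sum of `w(u,v)` over unordered pairs of distinct vertices. -/
noncomputable def totalWeight {V : Type*} [Fintype V] [DecidableEq V]
    (w : V → V → ℝ) : ℝ :=
  (∑ u, ∑ v ∈ Finset.univ.erase u, w u v) / 2

/-!
Average the cut value over all `k`-subsets of `V'`, `n = |V'|`. A pair `{u, v}` of positive
weight has an endpoint `u ∈ V'`. If `v ∉ V'`, it is separated by `C(n-1, k-1) = (k/n) C(n, k)`
of these sets; if `v ∈ V'`, by `2 C(n-2, k-1) ≥ C(n-1, k-1)` of them, using `2k ≤ n`. As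
`k/n ≥ ε`, the average cut value is at least `ε` times the total weight.
-/

lemma mul_choose_succ_le_choose {n k : ℕ} {ε : ℝ} (h : ε * (n + 1) ≤ k + 1) :
    ε * (n + 1).choose (k + 1) ≤ n.choose k := by
  have hid : ((n + 1 : ℝ)) * n.choose k = (n + 1).choose (k + 1) * (k + 1) := by
    exact_mod_cast Nat.add_one_mul_choose_eq n k
  have hC : (0 : ℝ) ≤ (n + 1).choose (k + 1) := by positivity
  refine le_of_mul_le_mul_left ?_ (by positivity : (0 : ℝ) < n + 1)
  nlinarith [mul_le_mul_of_nonneg_left h hC]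

lemma choose_succ_le_two_mul_choose {n k : ℕ} (h : 2 * k ≤ n) :
    (n + 1).choose k ≤ 2 * n.choose k := by
  have hid := Nat.choose_mul_succ_eq n k
  refine le_of_mul_le_mul_right (a := n + 1) ?_ (by omega)
  calc (n + 1).choose k * (n + 1) ≤ (n + 1).choose k * (2 * (n + 1 - k)) :=
        Nat.mul_le_mul_left _ (by omega)
    _ = 2 * n.choose k * (n + 1) := by linarith

section
variable {V : Type*} [DecidableEq V]

def cutCount (F : Finset (Finset V)) (u v : V) : ℕ := #{S ∈ F | u ∈ S ∧ v ∉ S}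

lemma cutCount_self (F : Finset (Finset V)) (u : V) : cutCount F u u = 0 := by
  simp [cutCount]

lemma choose_le_cutCount_powersetCard {s : Finset V} {u v : V} (hu : u ∈ s) (huv : u ≠ v)
    (k : ℕ) : (#((s.erase u).erase v)).choose k ≤ cutCount (s.powersetCard (k + 1)) u v := by
  rw [← card_powersetCard, cutCount]
  have hnot : ∀ T ∈ powersetCard k ((s.erase u).erase v), u ∉ T ∧ v ∉ T := fun T hT =>
    ⟨fun h => by simpa using (mem_powersetCard.1 hT).1 h,
     fun h => by simpa using (mem_powersetCard.1 hT).1 h⟩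
  refine card_le_card_of_injOn (insert u) (fun T hT => ?_) (fun T₁ h₁ T₂ h₂ h => ?_)
  · obtain ⟨hsub, hcard⟩ := mem_powersetCard.1 hT
    simp only [coe_filter, mem_powersetCard]
    refine ⟨⟨insert_subset hu (hsub.trans ((erase_subset _ _).trans (erase_subset _ _))), ?_⟩,
      mem_insert_self _ _, by simp [huv.symm, (hnot T hT).2]⟩
    rw [card_insert_of_notMem (hnot T hT).1, hcard]
  · rw [← erase_insert (hnot T₁ h₁).1, h, erase_insert (hnot T₂ h₂).1]

lemma mul_choose_le_cutCount_add {s : Finset V} {k : ℕ} {ε : ℝ} (hlow : 2 * (k + 1) ≤ #s)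
    (hhigh : ε * #s ≤ (k + 1 : ℕ)) {u v : V} (hu : u ∈ s) (huv : u ≠ v) :
    ε * (#s).choose (k + 1) ≤
      cutCount (s.powersetCard (k + 1)) u v + cutCount (s.powersetCard (k + 1)) v u := by
  obtain ⟨m, hm⟩ : ∃ m, #s = m + 2 := ⟨#s - 2, by omega⟩
  rw [hm] at hhigh ⊢
  have hfirst : ε * (m + 2).choose (k + 1) ≤ (m + 1).choose k :=
    mul_choose_succ_le_choose (n := m + 1) (by push_cast at hhigh ⊢; linarith)
  have huv_count := choose_le_cutCount_powersetCard hu huv k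
  by_cases hv : v ∈ s
  · have hvu_count := choose_le_cutCount_powersetCard hv huv.symm k
    have hcard : #((s.erase u).erase v) = m := by
      rw [card_erase_of_mem (mem_erase.2 ⟨huv.symm, hv⟩), card_erase_of_mem hu]; omega
    have hcard' : #((s.erase v).erase u) = m := by
      rw [card_erase_of_mem (mem_erase.2 ⟨huv, hu⟩), card_erase_of_mem hv]; omega
    rw [hcard] at huv_count
    rw [hcard'] at hvu_count
    have hsecond := choose_succ_le_two_mul_choose (n := m) (k := k) (by omega)
    calc ε * (m + 2).choose (k + 1) ≤ (m + 1).choose k := hfirst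
      _ ≤ _ := by exact_mod_cast by omega
  · have hcard : #((s.erase u).erase v) = m + 1 := by
      rw [erase_eq_of_notMem (fun h => hv (mem_of_mem_erase h)), card_erase_of_mem hu]; omega
    rw [hcard] at huv_count
    calc ε * (m + 2).choose (k + 1) ≤ (m + 1).choose k := hfirst
      _ ≤ _ := by exact_mod_cast by omega

variable [Fintype V]

lemma cutVal_eq_sum_ite (w : V → V → ℝ) (S : Finset V) :
    cutVal w S = ∑ u, ∑ v, if u ∈ S ∧ v ∉ S then w u v else 0 := by
  simp only [cutVal, ite_and, ← mem_compl, sum_ite_irrel, sum_const_zero, Fintype.sum_ite_mem]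

lemma sum_cutVal_eq (w : V → V → ℝ) (F : Finset (Finset V)) :
    ∑ S ∈ F, cutVal w S = ∑ u, ∑ v, (cutCount F u v : ℝ) * w u v := by
  simp only [cutVal_eq_sum_ite, cutCount, natCast_card_filter, sum_mul, boole_mul]
  rw [sum_comm]
  exact sum_congr rfl fun u _ => sum_comm

lemma two_mul_sum_cutVal_eq {w : V → V → ℝ} (hsymm : ∀ u v, w u v = w v u)
    (F : Finset (Finset V)) :
    2 * ∑ S ∈ F, cutVal w S =
      ∑ u, ∑ v ∈ univ.erase u, ((cutCount F u v + cutCount F v u : ℕ) : ℝ) * w u v := by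
  have hswap : ∑ u, ∑ v, (cutCount F u v : ℝ) * w u v =
      ∑ u, ∑ v, (cutCount F v u : ℝ) * w u v := by
    rw [sum_comm]
    exact sum_congr rfl fun u _ => sum_congr rfl fun v _ => by rw [hsymm]
  rw [two_mul, sum_cutVal_eq]
  nth_rewrite 2 [hswap]
  rw [← sum_add_distrib]
  refine sum_congr rfl fun u _ => ?_
  rw [sum_erase _ (by simp [cutCount_self]), ← sum_add_distrib]
  push_cast
  exact sum_congr rfl fun v _ => by ring

lemma exists_mul_totalWeight_le_cutVal {w : V → V → ℝ} (hsymm : ∀ u v, w u v = w v u)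
    (hnonneg : ∀ u v, 0 ≤ w u v) {F : Finset (Finset V)} (hF : F.Nonempty) (c : ℝ)
    (h : ∀ u v, u ≠ v → 0 < w u v →
      c * #F ≤ ((cutCount F u v + cutCount F v u : ℕ) : ℝ)) :
    ∃ S ∈ F, c * totalWeight w ≤ cutVal w S := by
  refine exists_le_of_sum_le hF ?_
  suffices hdouble : c * #F * (2 * totalWeight w) ≤ 2 * ∑ S ∈ F, cutVal w S by
    rw [sum_const, nsmul_eq_mul]
    linarith
  rw [two_mul_sum_cutVal_eq hsymm, totalWeight, mul_div_cancel₀ _ two_ne_zero, mul_sum]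
  refine sum_le_sum fun u _ => ?_
  rw [mul_sum]
  refine sum_le_sum fun v hv => ?_
  rcases (hnonneg u v).eq_or_lt with h0 | hpos
  · simp [← h0]
  · exact mul_le_mul_of_nonneg_right (h u v (ne_of_mem_erase hv).symm hpos) hpos.le

end

theorem kernel_opt_fraction {V : Type*} [Fintype V] [DecidableEq V]
    (w : V → V → ℝ) (hsymm : ∀ u v, w u v = w v u) (hnonneg : ∀ u v, 0 ≤ w u v)
    (ε : ℝ) (hε0 : 0 < ε)
    (V' : Finset V) (k : ℕ) (hk : 1 ≤ k)
    (hlow : 2 * k ≤ V'.card) (hhigh : (V'.card : ℝ) ≤ (k : ℝ) / ε)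
    (hcover : ∀ u v : V, u ≠ v → 0 < w u v → u ∈ V' ∨ v ∈ V') :
    ∃ S ⊆ V', S.card = k ∧ ε * totalWeight w ≤ cutVal w S := by
  obtain ⟨k, rfl⟩ : ∃ j, k = j + 1 := ⟨k - 1, by omega⟩
  have hεn : ε * #V' ≤ (k + 1 : ℕ) := by
    rw [mul_comm]
    exact (le_div_iff₀ hε0).1 hhigh
  have hseparated : ∀ u v, u ≠ v → 0 < w u v → ε * #(V'.powersetCard (k + 1)) ≤
      ((cutCount (V'.powersetCard (k + 1)) u v +
        cutCount (V'.powersetCard (k + 1)) v u : ℕ) : ℝ) := by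
    intro u v huv hpos
    rw [card_powersetCard]
    rcases hcover u v huv hpos with hu | hv
    · exact_mod_cast mul_choose_le_cutCount_add hlow hεn hu huv
    · rw [Nat.add_comm (cutCount _ u v)]
      exact_mod_cast mul_choose_le_cutCount_add hlow hεn hv huv.symm
  obtain ⟨S, hS, hcut⟩ := exists_mul_totalWeight_le_cutVal hsymm hnonneg
    (powersetCard_nonempty.2 (by omega : k + 1 ≤ #V')) ε hseparated
  exact ⟨S, (mem_powersetCard.1 hS).1, (mem_powersetCard.1 hS).2, hcut⟩
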